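/- arXiv:1702.05299 — 8 statements merged into one kernel-verified Lean document; each statement's English description precedes it below -/
import Mathlib

section
/- Let f : ℤ^d → ℂ satisfy (-Δ + V) f = 0 on ℤ^d for the discrete Laplacian Δ and an arbitrary potential V : ℤ^d → ℝ. If f vanishes on the slab {j ∈ ℤ^d : j₁ = k or j₁ = k+1} of width 2 for some k ∈ ℤ, then f ≡ 0 on ℤ^d. -/
/-!
Fix a coordinate direction `z`. At a point `i` of a layer `{j : j_z = c}` on which `f`
vanishes, the equation `(-Δ + V) f = 0` loses the potential term and all neighbours inside the
layer, leaving `f (i + e_z) + f (i - e_z) = 0`. Hence two consecutive vanishing layers force the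
next layer on either side to vanish, and induction over `c` sweeps out all of `ℤ^d`.
-/

/-- Discrete Laplacian on `ℤ^d`: `(Δf)(i) = Σ_{j ∼ i} f(j) − 2d·f(i)`. -/
noncomputable def discreteLaplacian (d : ℕ) (f : (Fin d → ℤ) → ℂ) (i : Fin d → ℤ) : ℂ :=
  (∑ k : Fin d,
    (f (Function.update i k (i k + 1)) + f (Function.update i k (i k - 1))))
  - 2 * d * f i

open Function

section

variable {d : ℕ} {f : (Fin d → ℤ) → ℂ} {z : Fin d}

def VanishesOnLayer (f : (Fin d → ℤ) → ℂ) (z : Fin d) (c : ℤ) : Prop :=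
  ∀ j : Fin d → ℤ, j z = c → f j = 0

lemma discreteLaplacian_eq_of_vanishesOnLayer {i : Fin d → ℤ} (h : VanishesOnLayer f z (i z)) :
    discreteLaplacian d f i = f (update i z (i z + 1)) + f (update i z (i z - 1)) := by
  have h_lateral (m : Fin d) (hm : m ≠ z) (a : ℤ) : f (update i m a) = 0 :=
    h _ (update_of_ne hm.symm a i)
  rw [discreteLaplacian, h i rfl, mul_zero, sub_zero,
    Fintype.sum_eq_single z fun m hm ↦ by rw [h_lateral m hm, h_lateral m hm, add_zero]]

variable {V : (Fin d → ℤ) → ℝ}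

lemma apply_update_add_one_eq_neg_of_vanishesOnLayer
    (heq : ∀ i, -discreteLaplacian d f i + (V i : ℂ) * f i = 0) {c : ℤ}
    (h : VanishesOnLayer f z c) (j : Fin d → ℤ) :
    f (update j z (c + 1)) = -f (update j z (c - 1)) := by
  set i := update j z c
  have hi : i z = c := update_self z c j
  have hlap := heq i
  rw [discreteLaplacian_eq_of_vanishesOnLayer (hi ▸ h), h i hi, mul_zero, add_zero, hi] at hlap
  simp only [i, update_idem] at hlap
  linear_combination -hlap

lemma VanishesOnLayer.add_two (heq : ∀ i, -discreteLaplacian d f i + (V i : ℂ) * f i = 0)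
    {c : ℤ} (h₀ : VanishesOnLayer f z c) (h₁ : VanishesOnLayer f z (c + 1)) :
    VanishesOnLayer f z (c + 2) := by
  intro j hj
  have := apply_update_add_one_eq_neg_of_vanishesOnLayer heq h₁ j
  rwa [add_sub_cancel_right, h₀ _ (update_self z c j), neg_zero, add_assoc, one_add_one_eq_two,
    ← hj, update_eq_self] at this

lemma VanishesOnLayer.sub_one (heq : ∀ i, -discreteLaplacian d f i + (V i : ℂ) * f i = 0)
    {c : ℤ} (h₀ : VanishesOnLayer f z c) (h₁ : VanishesOnLayer f z (c + 1)) :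
    VanishesOnLayer f z (c - 1) := by
  intro j hj
  have := apply_update_add_one_eq_neg_of_vanishesOnLayer heq h₀ j
  rwa [h₁ _ (update_self z _ j), zero_eq_neg, ← hj, update_eq_self] at this

theorem eq_zero_of_vanishesOnLayer_of_vanishesOnLayer_add_one
    (heq : ∀ i, -discreteLaplacian d f i + (V i : ℂ) * f i = 0)
    {c : ℤ} (h₀ : VanishesOnLayer f z c) (h₁ : VanishesOnLayer f z (c + 1)) (j : Fin d → ℤ) :
    f j = 0 := by
  have h_all (n : ℤ) : VanishesOnLayer f z n ∧ VanishesOnLayer f z (n + 1) := by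
    induction n using Int.inductionOn' (b := c) with
    | zero => exact ⟨h₀, h₁⟩
    | succ n _ ih =>
      exact ⟨ih.2, by simpa only [add_assoc, one_add_one_eq_two] using ih.1.add_two heq ih.2⟩
    | pred n _ ih => exact ⟨ih.1.sub_one heq ih.2, by simpa only [sub_add_cancel] using ih.1⟩
  exact (h_all (j z)).1 j rfl

end

/-- Unique continuation from the slab `{j : j₁ = k or j₁ = k+1}` of width 2
for solutions of `(-Δ + V) f = 0` on `ℤ^d`. -/
theorem uc_from_width_two_slab (d : ℕ) (hd : 0 < d) (k : ℤ)
    (V : (Fin d → ℤ) → ℝ) (f : (Fin d → ℤ) → ℂ)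
    (heq : ∀ i, -discreteLaplacian d f i + (V i : ℂ) * f i = 0)
    (hvan : ∀ j : Fin d → ℤ, (j ⟨0, hd⟩ = k ∨ j ⟨0, hd⟩ = k + 1) → f j = 0) :
    ∀ j, f j = 0 :=
  eq_zero_of_vanishesOnLayer_of_vanishesOnLayer_add_one heq
    (fun j hj ↦ hvan j (Or.inl hj)) (fun j hj ↦ hvan j (Or.inr hj))
end

section
/- Let f : ℤ^d → ℂ satisfy (-Δ + V) f = 0 on ℤ^d for the discrete Laplacian Δ and an arbitrary potential V : ℤ^d → ℝ. If f has bounded (finite) support, then f ≡ 0. In other words, the discrete Schrödinger operator on ℤ^d admits no nonzero finitely supported eigenfunctions. -/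
theorem discreteLaplacian_update_add_one_of_vanish_above {d : ℕ} {f : (Fin d → ℤ) → ℂ}
    (p : Fin d → ℤ) (k : Fin d) (hzero : ∀ q, p k < q k → f q = 0) :
    discreteLaplacian d f (Function.update p k (p k + 1)) = f p := by
  set q := Function.update p k (p k + 1)
  have hqk : q k = p k + 1 := Function.update_self k _ p
  have hdown : Function.update q k (q k - 1) = p := by
    simp [q, Function.update_idem]
  have hup : ∀ l, f (Function.update q l (q l + 1)) = 0 := by
    intro l
    apply hzero
    rcases eq_or_ne l k with rfl | hl
    · simp [hqk]
    · rw [Function.update_of_ne hl.symm, hqk]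
      omega
  have hside : ∀ l ≠ k, f (Function.update q l (q l - 1)) = 0 := by
    intro l hl
    apply hzero
    rw [Function.update_of_ne hl.symm, hqk]
    omega
  have hq : f q = 0 := hzero q (by omega)
  rw [discreteLaplacian, Finset.sum_eq_single_of_mem k (Finset.mem_univ _)]
  · simp [hup, hdown, hq]
  · intro l _ hl
    simp [hup l, hside l hl]

theorem eq_zero_of_schrodinger_of_vanish_above {d : ℕ} {V : (Fin d → ℤ) → ℝ}
    {f : (Fin d → ℤ) → ℂ} (heq : ∀ i, -discreteLaplacian d f i + (V i : ℂ) * f i = 0)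
    (p : Fin d → ℤ) (k : Fin d) (hzero : ∀ q, p k < q k → f q = 0) : f p = 0 := by
  have hq := heq (Function.update p k (p k + 1))
  rw [discreteLaplacian_update_add_one_of_vanish_above p k hzero,
    hzero (Function.update p k (p k + 1)) (by simp)] at hq
  simpa using hq

/-- The discrete Schrödinger operator `-Δ + V` on `ℤ^d` admits no nonzero
finitely supported eigenfunctions: if `(-Δ + V) f = 0` and `f` has finite
support, then `f ≡ 0`. -/
theorem no_finitely_supported_solutions (d : ℕ) (hd : 0 < d)
    (V : (Fin d → ℤ) → ℝ) (f : (Fin d → ℤ) → ℂ)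
    (heq : ∀ i, -discreteLaplacian d f i + (V i : ℂ) * f i = 0)
    (hfin : (Function.support f).Finite) :
    ∀ j, f j = 0 := by
  by_contra! ⟨j, hj⟩
  let k : Fin d := ⟨0, hd⟩
  obtain ⟨p, hp, hmax⟩ := Set.exists_max_image _ (fun q => q k) hfin ⟨j, hj⟩
  refine hp (eq_zero_of_schrodinger_of_vanish_above heq p k fun q hq => ?_)
  by_contra hfq
  exact (hmax q hfq).not_gt hq
end

section
/- Let f : ℤ² → ℂ satisfy Δf = 0 on ℤ² (discrete Laplacian) and f ≡ 0 on the half-space {j ∈ ℤ² : ⟨j, ν⟩ ≤ α}, where ν ∈ ℝ² is a nonzero vector not parallel to (1,1) or (−1,1). Then f ≡ 0 on ℤ². -/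
/-!
A harmonic function on `ℤ²` is determined at `i + (1, 0)` by its values at `i` and at the other
three neighbours of `i`. If `|ν.2| < ν.1`, all four of these points lie strictly deeper in the
half-space `{⟨j, ν⟩ ≤ c}` than `i + (1, 0)`, by at least `ν.1 - |ν.2|`, so vanishing propagates
from `{⟨j, ν⟩ ≤ α}` to `{⟨j, ν⟩ ≤ α + n (ν.1 - |ν.2|)}` for every `n`, that is, to all of `ℤ²`.
Quarter turns of the lattice preserve harmonicity, and unless `|ν.1| = |ν.2|` one of them brings
`ν` into the cone `|ν.2| < ν.1`.
-/

/-- Discrete Laplacian on `ℤ²`. -/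
noncomputable def discreteLaplacian2 (f : ℤ × ℤ → ℂ) (i : ℤ × ℤ) : ℂ :=
  f (i.1 + 1, i.2) + f (i.1 - 1, i.2) + f (i.1, i.2 + 1) + f (i.1, i.2 - 1) - 4 * f i

def UniqueContinuationFromHalfSpaces (ν : ℝ × ℝ) : Prop :=
  ∀ (f : ℤ × ℤ → ℂ) (α : ℝ), (∀ i, discreteLaplacian2 f i = 0) →
    (∀ j : ℤ × ℤ, (j.1 : ℝ) * ν.1 + (j.2 : ℝ) * ν.2 ≤ α → f j = 0) → ∀ j, f j = 0

lemma discreteLaplacian2_comp_rotate (f : ℤ × ℤ → ℂ) (i : ℤ × ℤ) :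
    discreteLaplacian2 (fun j => f (-j.2, j.1)) i = discreteLaplacian2 f (-i.2, i.1) := by
  simp only [discreteLaplacian2, neg_add', neg_sub', sub_neg_eq_add]
  ring

lemma apply_add_one_fst_eq_zero_of_discreteLaplacian2_eq_zero {f : ℤ × ℤ → ℂ} {i : ℤ × ℤ}
    (hΔ : discreteLaplacian2 f i = 0) (h : f i = 0) (hl : f (i.1 - 1, i.2) = 0)
    (hu : f (i.1, i.2 + 1) = 0) (hd : f (i.1, i.2 - 1) = 0) : f (i.1 + 1, i.2) = 0 := by
  unfold discreteLaplacian2 at hΔ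
  linear_combination hΔ - hl - hu - hd + 4 * h

namespace UniqueContinuationFromHalfSpaces

lemma of_rotate {ν : ℝ × ℝ} (h : UniqueContinuationFromHalfSpaces (ν.2, -ν.1)) :
    UniqueContinuationFromHalfSpaces ν := by
  intro f α hharm hvan j
  have hrot := h (fun j => f (-j.2, j.1)) α
    (fun i => by rw [discreteLaplacian2_comp_rotate]; exact hharm _)
    (fun i hi => hvan _ (by push_cast at hi ⊢; linarith))
  simpa using hrot (j.2, -j.1)

lemma of_abs_lt {ν : ℝ × ℝ} (hν : |ν.2| < ν.1) : UniqueContinuationFromHalfSpaces ν := by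
  intro f α hharm hvan
  set δ := ν.1 - |ν.2|
  have hδ : 0 < δ := sub_pos.mpr hν
  have hlevel : ∀ n : ℕ, ∀ j : ℤ × ℤ,
      (j.1 : ℝ) * ν.1 + (j.2 : ℝ) * ν.2 ≤ α + n * δ → f j = 0 := by
    intro n
    induction n with
    | zero => simpa using hvan
    | succ n ih =>
      rintro ⟨x, y⟩ hj
      have hle := le_abs_self ν.2
      have hge := neg_abs_le ν.2
      push_cast at hj ih
      have h := apply_add_one_fst_eq_zero_of_discreteLaplacian2_eq_zero (hharm (x - 1, y))
        (ih _ (by push_cast; linarith)) (ih _ (by push_cast; linarith))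
        (ih _ (by push_cast; linarith)) (ih _ (by push_cast; linarith))
      simpa using h
  intro j
  obtain ⟨n, hn⟩ := exists_nat_ge (((j.1 : ℝ) * ν.1 + (j.2 : ℝ) * ν.2 - α) / δ)
  exact hlevel n j (by rw [div_le_iff₀ hδ] at hn; linarith)

lemma of_abs_ne {ν : ℝ × ℝ} (hν : |ν.1| ≠ |ν.2|) : UniqueContinuationFromHalfSpaces ν := by
  rcases hν.lt_or_gt with h | h
  · rcases (abs_pos.mp ((abs_nonneg _).trans_lt h)).lt_or_gt with h2 | h2
    · refine of_rotate (of_rotate (of_rotate (of_abs_lt ?_)))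
      simpa [abs_of_neg h2] using h
    · refine of_rotate (of_abs_lt ?_)
      simpa [abs_of_pos h2] using h
  · rcases (abs_pos.mp ((abs_nonneg _).trans_lt h)).lt_or_gt with h1 | h1
    · refine of_rotate (of_rotate (of_abs_lt ?_))
      simpa [abs_of_neg h1] using h
    · exact of_abs_lt (by simpa [abs_of_pos h1] using h)

end UniqueContinuationFromHalfSpaces

theorem uc_from_half_space_generic_direction_general
    (f : ℤ × ℤ → ℂ) (hharm : ∀ i, discreteLaplacian2 f i = 0)
    (ν : ℝ × ℝ) (α : ℝ)
    (hdiag : ¬ ∃ t : ℝ, ν = (t, t)) (hantidiag : ¬ ∃ t : ℝ, ν = (-t, t))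
    (hvan : ∀ j : ℤ × ℤ, (j.1 : ℝ) * ν.1 + (j.2 : ℝ) * ν.2 ≤ α → f j = 0) :
    ∀ j, f j = 0 := by
  have hν : |ν.1| ≠ |ν.2| := by
    intro h
    rcases abs_eq_abs.mp h with h | h
    · exact hdiag ⟨ν.1, Prod.ext rfl h.symm⟩
    · exact hantidiag ⟨ν.2, Prod.ext h rfl⟩
  exact UniqueContinuationFromHalfSpaces.of_abs_ne hν f α hharm hvan

/-- Unique continuation in `ℤ²` from half spaces `{j : ⟨j, ν⟩ ≤ α}` whose border is
not in a 45° angle to the axes, i.e. `ν` is not parallel to `(1,1)` or `(-1,1)`. -/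
theorem uc_from_half_space_generic_direction
    (f : ℤ × ℤ → ℂ) (hharm : ∀ i, discreteLaplacian2 f i = 0)
    (ν : ℝ × ℝ) (α : ℝ) (hν : ν ≠ 0)
    (hdiag : ¬ ∃ t : ℝ, ν = (t, t)) (hantidiag : ¬ ∃ t : ℝ, ν = (-t, t))
    (hvan : ∀ j : ℤ × ℤ, (j.1 : ℝ) * ν.1 + (j.2 : ℝ) * ν.2 ≤ α → f j = 0) :
    ∀ j, f j = 0 :=
  uc_from_half_space_generic_direction_general f hharm ν α hdiag hantidiag hvan
end

section
/- There exists a nonzero function f : ℤ² → ℂ with Δf = 0 on ℤ² (discrete Laplacian) such that f(j) = 0 for all j = (j₁, j₂) with j₁ + j₂ ≤ 0. Hence unique continuation from the diagonal half-space fails for discrete harmonic functions on ℤ². -/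
/-!
Write `f (k, n - k) = L n k`. At a point of the diagonal `j₁ + j₂ = n` the equation `Δf = 0` reads
`L (n+1) k + L (n+1) (k+1) = 4 L n k - L (n-1) k - L (n-1) (k-1)`, so the diagonals can be filled in
upwards one at a time, because `g ↦ g + g (· + 1)` is onto on functions `ℤ → ℂ`. Taking `L n = 0`
for `n ≤ 0` and `L 1 k = (-1) ^ k`, which lies in the kernel of that map, makes the equation hold
at `n = 0` as well, and `f ≠ 0`.
-/

open Finset in
theorem Int.fwdDiff_surjective {G : Type*} [AddCommGroup G] :
    Function.Surjective (fwdDiff 1 : (ℤ → G) → ℤ → G) := by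
  intro d
  refine ⟨fun k => ∑ j ∈ Ico 0 k, d j - ∑ j ∈ Ico k 0, d j, funext fun k => ?_⟩
  rcases le_or_gt 0 k with hk | hk
  · simp [fwdDiff, ← sum_Ico_add_eq_sum_Ico_add_one hk, Ico_eq_empty_of_le, hk,
      show 0 ≤ k + 1 by omega]
  · simp [fwdDiff, ← insert_Ico_add_one_left_eq_Ico hk, Ico_eq_empty_of_le, hk.le,
      show k + 1 ≤ 0 by omega]

theorem exists_forall_add_add_one_eq {G : Type*} [AddCommGroup G] (c : ℤ → G) :
    ∃ g : ℤ → G, ∀ k, g k + g (k + 1) = c k := by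
  obtain ⟨S, hS⟩ := Int.fwdDiff_surjective fun k => -(k.negOnePow • c k)
  refine ⟨fun k => k.negOnePow • S k, fun k => ?_⟩
  have hk : S (k + 1) - S k = -(k.negOnePow • c k) := congrFun hS k
  change k.negOnePow • S k + (k + 1).negOnePow • S (k + 1) = c k
  rw [Int.negOnePow_succ, Units.neg_smul, ← sub_eq_add_neg, ← smul_sub, ← neg_sub, hk, neg_neg,
    smul_smul, Int.units_mul_self, one_smul]

/-- `diagonalValues n k` is the value at `(k, n - k)`. -/
noncomputable def diagonalValues : ℕ → ℤ → ℂ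
  | 0 => 0
  | 1 => fun k => (-1) ^ k
  | n + 2 => (exists_forall_add_add_one_eq fun k =>
      4 * diagonalValues (n + 1) k - diagonalValues n k - diagonalValues n (k - 1)).choose

theorem diagonalValues_add_two (n : ℕ) (k : ℤ) :
    diagonalValues (n + 2) k + diagonalValues (n + 2) (k + 1) =
      4 * diagonalValues (n + 1) k - diagonalValues n k - diagonalValues n (k - 1) :=
  (exists_forall_add_add_one_eq _).choose_spec k

theorem diagonalValues_toNat_add_one (n k : ℤ) :
    diagonalValues (n + 1).toNat k + diagonalValues (n + 1).toNat (k + 1) =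
      4 * diagonalValues n.toNat k - diagonalValues (n - 1).toNat k
        - diagonalValues (n - 1).toNat (k - 1) := by
  rcases lt_trichotomy n 0 with hn | rfl | hn
  · simp [Int.toNat_of_nonpos, hn.le, show n + 1 ≤ 0 by omega, show n - 1 ≤ 0 by omega,
      diagonalValues]
  · simp [diagonalValues, zpow_add_one₀]
  · obtain ⟨m, rfl⟩ : ∃ m : ℕ, n = m + 1 := ⟨(n - 1).toNat, by omega⟩
    simpa [show ((m : ℤ) + 1 + 1).toNat = m + 2 by omega, show ((m : ℤ) + 1).toNat = m + 1 by omega]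
      using diagonalValues_add_two m k

theorem discreteLaplacian2_eq_zero_of_diagonal {L : ℤ → ℤ → ℂ}
    (hL : ∀ n k, L (n + 1) k + L (n + 1) (k + 1) = 4 * L n k - L (n - 1) k - L (n - 1) (k - 1))
    (i : ℤ × ℤ) : discreteLaplacian2 (fun j => L (j.1 + j.2) j.1) i = 0 := by
  obtain ⟨x, y⟩ := i
  simp only [discreteLaplacian2, show x + 1 + y = x + y + 1 by ring,
    show x - 1 + y = x + y - 1 by ring, show x + (y + 1) = x + y + 1 by ring,
    show x + (y - 1) = x + y - 1 by ring]
  linear_combination hL (x + y) x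

/-- Unique continuation from the diagonal half space `{j : j₁ + j₂ ≤ 0}` fails on `ℤ²`:
there exists a nonzero discrete harmonic function vanishing on that half space. -/
theorem no_uc_from_diagonal_half_space :
    ∃ f : ℤ × ℤ → ℂ, f ≠ 0 ∧ (∀ i, discreteLaplacian2 f i = 0) ∧
      ∀ j : ℤ × ℤ, j.1 + j.2 ≤ 0 → f j = 0 := by
  refine ⟨fun j => diagonalValues (j.1 + j.2).toNat j.1, fun h => ?_,
    discreteLaplacian2_eq_zero_of_diagonal (L := fun n => diagonalValues n.toNat)
      diagonalValues_toNat_add_one, fun j hj => ?_⟩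
  · simpa [diagonalValues] using congrFun h (1, 0)
  · simp [Int.toNat_of_nonpos hj, diagonalValues]
end

section
/- Let f : ℤ² → ℂ satisfy Δf = 0 on ℤ². Suppose f vanishes on the quadrant Q_{c₁,c₂} = {j ∈ ℤ² : j₁ ≤ c₁ and j₂ ≤ c₂} for some c₁, c₂ ∈ ℤ. Then f vanishes on the entire anti-diagonal line {j ∈ ℤ² : j₁ + j₂ = c₁ + c₂}. -/
theorem discreteLaplacian2_comp_swap (f : ℤ × ℤ → ℂ) (i : ℤ × ℤ) :
    discreteLaplacian2 (f ∘ Prod.swap) i = discreteLaplacian2 f i.swap := by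
  simp only [discreteLaplacian2, Function.comp_apply, Prod.swap_prod_mk, Prod.fst_swap,
    Prod.snd_swap]
  ring

theorem vanish_on_quadrant_shift_right (f : ℤ × ℤ → ℂ)
    (hharm : ∀ i, discreteLaplacian2 f i = 0) (a b : ℤ)
    (hvan : ∀ j : ℤ × ℤ, j.1 ≤ a → j.2 ≤ b → f j = 0) :
    ∀ j : ℤ × ℤ, j.1 ≤ a + 1 → j.2 ≤ b - 1 → f j = 0 := by
  rintro ⟨x, y⟩ hx hy
  obtain hx | rfl : x ≤ a ∨ x = a + 1 := by omega
  · exact hvan _ hx (by dsimp only at hy ⊢; omega)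
  · have hlap := hharm (a, y)
    simp only [discreteLaplacian2] at hlap
    rw [hvan (a - 1, y) (by simp) (by simp; omega), hvan (a, y + 1) le_rfl (by simp; omega),
      hvan (a, y - 1) le_rfl (by simp; omega), hvan (a, y) le_rfl (by simp; omega)] at hlap
    linear_combination hlap

theorem vanish_on_quadrant_shift_right_nat (f : ℤ × ℤ → ℂ)
    (hharm : ∀ i, discreteLaplacian2 f i = 0) (a b : ℤ)
    (hvan : ∀ j : ℤ × ℤ, j.1 ≤ a → j.2 ≤ b → f j = 0) (n : ℕ) :
    ∀ j : ℤ × ℤ, j.1 ≤ a + n → j.2 ≤ b - n → f j = 0 := by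
  induction n with
  | zero => simpa using hvan
  | succ n ih =>
    push_cast
    simpa only [add_assoc, sub_sub] using vanish_on_quadrant_shift_right f hharm _ _ ih

/-- If a discrete harmonic function on `ℤ²` vanishes on the quadrant
`Q_{c₁,c₂} = {j : j₁ ≤ c₁, j₂ ≤ c₂}`, then it vanishes on the whole anti-diagonal
line `{j : j₁ + j₂ = c₁ + c₂}`. -/
theorem vanish_on_quadrant_implies_vanish_on_antidiagonal
    (f : ℤ × ℤ → ℂ) (hharm : ∀ i, discreteLaplacian2 f i = 0)
    (c₁ c₂ : ℤ)
    (hvan : ∀ j : ℤ × ℤ, j.1 ≤ c₁ → j.2 ≤ c₂ → f j = 0) :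
    ∀ j : ℤ × ℤ, j.1 + j.2 = c₁ + c₂ → f j = 0 := by
  rintro ⟨x, y⟩ hxy
  dsimp only at hxy
  rcases le_total c₁ x with hx | hx
  · exact vanish_on_quadrant_shift_right_nat f hharm c₁ c₂ hvan (x - c₁).toNat (x, y)
      (by dsimp only; omega) (by dsimp only; omega)
  · have hharm_swap (i : ℤ × ℤ) : discreteLaplacian2 (f ∘ Prod.swap) i = 0 := by
      rw [discreteLaplacian2_comp_swap, hharm]
    exact vanish_on_quadrant_shift_right_nat (f ∘ Prod.swap) hharm_swap c₂ c₁
      (fun j hj₂ hj₁ => hvan j.swap hj₁ hj₂) (c₁ - x).toNat (y, x)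
      (by dsimp only; omega) (by dsimp only; omega)
end

section
/- For the discrete Laplacian on ℤ², if a function f : ℤ² → ℂ satisfies Δf = 0, vanishes on the diagonal half-space {j : j₁ + j₂ ≤ 0}, and additionally vanishes at one point of the anti-diagonal {j : j₁ + j₂ = 1}, then f vanishes on the entire anti-diagonal {j : j₁ + j₂ = 1}. -/
/-!
At a point `(k, -k)` of the boundary line, three of the five terms of `Δf = 0` lie in the
half-space where `f` vanishes, leaving `f (k + 1, -k) + f (k, 1 - k) = 0`. So along the
anti-diagonal `f` only alternates in sign, and one zero forces all of them.
-/

theorem Int.eq_zero_of_apply_add_one_eq_neg {M : Type*} [AddGroup M] {g : ℤ → M}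
    (hg : ∀ k, g (k + 1) = -g k) {k₀ : ℤ} (h₀ : g k₀ = 0) (k : ℤ) : g k = 0 := by
  induction k using Int.inductionOn' (b := k₀) with
  | zero => exact h₀
  | succ k _ ih => rw [hg, ih, neg_zero]
  | pred k _ ih => rwa [← neg_eq_zero, ← hg, sub_add_cancel]

theorem apply_antidiagonal_add_one_eq_neg {f : ℤ × ℤ → ℂ} {k : ℤ}
    (hΔ : discreteLaplacian2 f (k, -k) = 0) (hvan : ∀ j : ℤ × ℤ, j.1 + j.2 ≤ 0 → f j = 0) :
    f (k + 1, 1 - (k + 1)) = -f (k, 1 - k) := by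
  have hleft : f (k - 1, -k) = 0 := hvan _ (by simp)
  have hdown : f (k, -k - 1) = 0 := hvan _ (by simp; omega)
  have hcentre : f (k, -k) = 0 := hvan _ (by simp)
  rw [discreteLaplacian2, hleft, hdown, hcentre] at hΔ
  rw [show 1 - (k + 1) = -k by ring, show 1 - k = -k + 1 by ring]
  linear_combination hΔ

/-- If a discrete harmonic function on `ℤ²` vanishes on the diagonal half space
`{j : j₁ + j₂ ≤ 0}` and at one point of the anti-diagonal `{j : j₁ + j₂ = 1}`,
then it vanishes on the entire anti-diagonal `{j : j₁ + j₂ = 1}`. -/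
theorem vanish_on_antidiagonal_of_one_point
    (f : ℤ × ℤ → ℂ) (hharm : ∀ i, discreteLaplacian2 f i = 0)
    (hvan : ∀ j : ℤ × ℤ, j.1 + j.2 ≤ 0 → f j = 0)
    (p : ℤ × ℤ) (hp : p.1 + p.2 = 1) (hfp : f p = 0) :
    ∀ j : ℤ × ℤ, j.1 + j.2 = 1 → f j = 0 := by
  rintro ⟨a, b⟩ hab
  obtain ⟨p₁, p₂⟩ := p
  have hb : b = 1 - a := by simp only at hab; omega
  have hp₂ : p₂ = 1 - p₁ := by simp only at hp; omega
  subst hb hp₂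
  exact Int.eq_zero_of_apply_add_one_eq_neg (g := fun k ↦ f (k, 1 - k))
    (fun k ↦ apply_antidiagonal_add_one_eq_neg (hharm _) hvan) hfp a
end

section
/- For the discrete Laplacian on ℤ^d and any potential V : ℤ^d → ℝ, the dimension of the eigenspace of the restriction (−Δ + V)|_{Λ_L} (simple boundary conditions) to any eigenvalue E is at most |∂₍₂₎Λ_L|, the number of sites in Λ_L within distance 2 of the complement. Consequently this dimension is at most C·L^{d−1} for a constant C depending only on d. -/
/-- The box `Λ_L = {0, …, L-1}^d`. -/
def latticeBox (d : ℕ) (L : ℕ) : Set (Fin d → ℤ) :=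
  {i | ∀ k, 0 ≤ i k ∧ i k < L}

/-- The boundary layer `∂₍₂₎Λ_L`: sites of `Λ_L` within distance 2 of the complement. -/
def boundaryLayer (d : ℕ) (L : ℕ) : Set (Fin d → ℤ) :=
  {i | i ∈ latticeBox d L ∧ ∃ k, i k ≤ 1 ∨ (L : ℤ) - 2 ≤ i k}

/-!
An eigenfunction of `-Δ + V` on the box that vanishes on the two bottom layers `i k ∈ {0, 1}`
of some coordinate `k` vanishes identically: the eigenvalue equation at a site `j` expresses
`f (j + e_k)` through `f` at `j` and at the other neighbours of `j`, all of which lie in layers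
below, so the zeros propagate layer by layer through the box. Hence restricting to `∂₍₂₎Λ_L` is
injective on the eigenspace, whose dimension is therefore at most `|∂₍₂₎Λ_L|`. Finally
`∂₍₂₎Λ_L` is covered by the `d` slabs `{i ∈ Λ_L : i k ∈ {0, 1, L - 2, L - 1}}`, each of which
has at most `4 L^(d-1)` sites.
-/

open Finset Function

theorem LinearIndependent.fintype_card_le_ncard_of_eq_zero_on {K α ι : Type*} [Field K]
    [Fintype ι] {S : Set α} (hS : S.Finite) {W : Submodule K (α → K)} {F : ι → α → K}
    (hli : LinearIndependent K F) (hF : ∀ m, F m ∈ W)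
    (hW : ∀ f ∈ W, (∀ i ∈ S, f i = 0) → f = 0) :
    Fintype.card ι ≤ S.ncard := by
  have := hS.fintype
  let restrict : (α → K) →ₗ[K] (S → K) := LinearMap.funLeft K K Subtype.val
  have hspan : Submodule.span K (Set.range F) ≤ W :=
    Submodule.span_le.mpr (Set.range_subset_iff.mpr hF)
  have hdisj : Disjoint (Submodule.span K (Set.range F)) (LinearMap.ker restrict) := by
    refine Submodule.disjoint_def.mpr fun f hf hker => hW f (hspan hf) fun i hi => ?_
    exact congrFun (LinearMap.mem_ker.mp hker) ⟨i, hi⟩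
  have := (hli.map hdisj).fintype_card_le_finrank
  rwa [Module.finrank_fintype_fun_eq_card, ← Set.toFinset_card,
    ← Set.ncard_eq_toFinset_card'] at this

section Eigenspace

variable {d : ℕ}

theorem discreteLaplacian_add (f g : (Fin d → ℤ) → ℂ) (i : Fin d → ℤ) :
    discreteLaplacian d (f + g) i = discreteLaplacian d f i + discreteLaplacian d g i := by
  simp only [discreteLaplacian, Pi.add_apply, sum_add_distrib]
  ring

theorem discreteLaplacian_smul (c : ℂ) (f : (Fin d → ℤ) → ℂ) (i : Fin d → ℤ) :
    discreteLaplacian d (c • f) i = c * discreteLaplacian d f i := by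
  simp only [discreteLaplacian, Pi.smul_apply, smul_eq_mul, mul_sub, mul_sum]
  congr 1
  · exact sum_congr rfl fun k _ => by ring
  · ring

/-- The eigenspace of `(-Δ + V)|_{Λ_L}` for the eigenvalue `E`, realised as functions on `ℤ^d`
vanishing off `Λ_L`. -/
def latticeEigenspace (d L : ℕ) (V : (Fin d → ℤ) → ℝ) (E : ℂ) :
    Submodule ℂ ((Fin d → ℤ) → ℂ) where
  carrier := {f | (∀ i ∉ latticeBox d L, f i = 0) ∧
    ∀ i ∈ latticeBox d L, -discreteLaplacian d f i + (V i : ℂ) * f i = E * f i}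
  add_mem' := by
    rintro f g ⟨hf0, hfE⟩ ⟨hg0, hgE⟩
    refine ⟨fun i hi => by simp [hf0 i hi, hg0 i hi], fun i hi => ?_⟩
    simp only [Pi.add_apply, discreteLaplacian_add]
    linear_combination hfE i hi + hgE i hi
  zero_mem' := ⟨fun _ _ => rfl, fun _ _ => by simp [discreteLaplacian]⟩
  smul_mem' := by
    rintro c f ⟨hf0, hfE⟩
    refine ⟨fun i hi => by simp [hf0 i hi], fun i hi => ?_⟩
    simp only [Pi.smul_apply, smul_eq_mul, discreteLaplacian_smul]
    linear_combination c * hfE i hi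

theorem apply_update_add_one_eq_zero_of_discreteLaplacian_eq_zero {f : (Fin d → ℤ) → ℂ}
    {j : Fin d → ℤ} {k : Fin d} (hΔ : discreteLaplacian d f j = 0)
    (hbelow : ∀ i : Fin d → ℤ, i k ≤ j k → f i = 0) :
    f (update j k (j k + 1)) = 0 := by
  have hsum : ∑ k' : Fin d, (f (update j k' (j k' + 1)) + f (update j k' (j k' - 1))) = 0 := by
    simpa [discreteLaplacian, hbelow j le_rfl] using hΔ
  rwa [sum_eq_single k, hbelow (update j k (j k - 1)) (by simp), add_zero] at hsum
  · intro k' _ hk'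
    rw [hbelow _ (by simp [Ne.symm hk']), hbelow _ (by simp [Ne.symm hk']), add_zero]
  · simp

theorem eq_zero_of_mem_latticeEigenspace {L : ℕ} {V : (Fin d → ℤ) → ℝ} {E : ℂ}
    {f : (Fin d → ℤ) → ℂ} (hf : f ∈ latticeEigenspace d L V E) (k : Fin d)
    (hlayers : ∀ i ∈ latticeBox d L, i k ≤ 1 → f i = 0) : f = 0 := by
  obtain ⟨hout, hE⟩ := hf
  have hslab : ∀ t : ℕ, ∀ i : Fin d → ℤ, i k ≤ t + 1 → f i = 0 := by
    intro t
    induction t with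
    | zero =>
      intro i hi
      by_cases hbox : i ∈ latticeBox d L
      · exact hlayers i hbox (by simpa using hi)
      · exact hout i hbox
    | succ t ih =>
      intro i hi
      by_cases hle : i k ≤ t + 1
      · exact ih i hle
      by_cases hbox : i ∈ latticeBox d L
      swap
      · exact hout i hbox
      set j := update i k (t + 1)
      have hjk : j k = t + 1 := by simp [j]
      have hj : j ∈ latticeBox d L := by
        intro k'
        rcases eq_or_ne k' k with rfl | hk'
        · have := (hbox k').2
          constructor <;> omega
        · simpa [j, hk'] using hbox k'
      have hΔ : discreteLaplacian d f j = 0 := by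
        simpa [ih j hjk.le] using hE j hj
      have hij : update j k (j k + 1) = i := by
        ext k'
        rcases eq_or_ne k' k with rfl | hk'
        · push_cast at hi hle
          simp only [update_self, hjk]
          omega
        · simp [j, hk']
      rw [← hij]
      exact apply_update_add_one_eq_zero_of_discreteLaplacian_eq_zero hΔ (hjk ▸ ih)
  funext i
  by_cases hbox : i ∈ latticeBox d L
  · exact hslab L i (by have := (hbox k).2; omega)
  · exact hout i hbox

end Eigenspace

noncomputable def boundarySlab (d L : ℕ) (k : Fin d) : Finset (Fin d → ℤ) :=
  Fintype.piFinset (update (fun _ => Ico (0 : ℤ) L) k {0, 1, (L : ℤ) - 2, (L : ℤ) - 1})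

theorem boundaryLayer_subset_biUnion_boundarySlab (d L : ℕ) :
    boundaryLayer d L ⊆ ↑(univ.biUnion (boundarySlab d L)) := by
  rintro i ⟨hbox, k, hk⟩
  simp only [coe_biUnion, coe_univ, Set.mem_univ, Set.iUnion_true, Set.mem_iUnion, mem_coe]
  refine ⟨k, Fintype.mem_piFinset.mpr fun k' => ?_⟩
  rcases eq_or_ne k' k with rfl | hk'
  · have := hbox k'
    simp only [update_self, mem_insert, mem_singleton]
    omega
  · simpa [hk'] using hbox k'

theorem card_boundarySlab_le (d L : ℕ) (k : Fin d) :
    (boundarySlab d L k).card ≤ 4 * L ^ (d - 1) := by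
  rw [boundarySlab, Fintype.card_piFinset, ← mul_prod_erase univ _ (mem_univ k), update_self,
    prod_congr rfl fun k' hk' => by rw [update_of_ne (ne_of_mem_erase hk')]]
  simp only [Int.card_Ico, sub_zero, Int.toNat_natCast, prod_const, card_erase_of_mem (mem_univ k),
    card_univ, Fintype.card_fin]
  exact Nat.mul_le_mul_right _ card_le_four

theorem boundaryLayer_finite (d L : ℕ) : (boundaryLayer d L).Finite :=
  (finite_toSet _).subset (boundaryLayer_subset_biUnion_boundarySlab d L)

theorem ncard_boundaryLayer_le (d L : ℕ) :
    (boundaryLayer d L).ncard ≤ 4 * d * L ^ (d - 1) :=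
  calc (boundaryLayer d L).ncard
      ≤ (univ.biUnion (boundarySlab d L)).card := by
        rw [← Set.ncard_coe_finset]
        exact Set.ncard_le_ncard (boundaryLayer_subset_biUnion_boundarySlab d L)
    _ ≤ ∑ k, (boundarySlab d L k).card := card_biUnion_le
    _ ≤ ∑ _k : Fin d, 4 * L ^ (d - 1) := sum_le_sum fun k _ => card_boundarySlab_le d L k
    _ = 4 * d * L ^ (d - 1) := by simp [mul_comm, mul_left_comm]

/-- The dimension of any eigenspace of `(-Δ + V)|_{Λ_L}` (simple boundary
conditions) is at most `|∂₍₂₎Λ_L|`, hence at most `C · L^(d-1)` with `C = C(d)`: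
any linearly independent family of eigenfunctions to a common eigenvalue `E` has
at most that many members. -/
theorem eigenspace_dimension_bound (d : ℕ) (hd : 0 < d) :
    ∃ C : ℕ, ∀ (L : ℕ) (V : (Fin d → ℤ) → ℝ) (E : ℂ)
      (n : ℕ) (F : Fin n → (Fin d → ℤ) → ℂ),
      (∀ m, (∀ i ∉ latticeBox d L, F m i = 0) ∧
        ∀ i ∈ latticeBox d L,
          -discreteLaplacian d (F m) i + (V i : ℂ) * F m i = E * F m i) →
      LinearIndependent ℂ F →
      n ≤ (boundaryLayer d L).ncard ∧ n ≤ C * L ^ (d - 1) := by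
  refine ⟨4 * d, fun L V E n F hF hli => ?_⟩
  have hcard : n ≤ (boundaryLayer d L).ncard := by
    simpa using hli.fintype_card_le_ncard_of_eq_zero_on (boundaryLayer_finite d L)
      (W := latticeEigenspace d L V E) hF fun f hf hb =>
        eq_zero_of_mem_latticeEigenspace hf ⟨0, hd⟩ fun i hi hik => hb i ⟨hi, _, Or.inl hik⟩
  exact ⟨hcard, hcard.trans (ncard_boundaryLayer_le d L)⟩
end

section
/- Fix n ∈ ℕ. There exists an n-dimensional space of functions f : ℤ² → ℂ satisfying Δf = 0 on ℤ² and vanishing on the set {j ∈ ℤ² : j₁ ∈ {0, 1}} \ P, where P is a set of n distinct points in the double strip {j : j₁ ∈ {0,1}}: each assignment of values on P extends uniquely to a discrete harmonic function on ℤ² vanishing on the double strip outside P. -/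
/-! The equation `Δf (x, y) = 0` can be solved for `f (x + 1, y)` and for `f (x - 1, y)`, so it is a
second-order recurrence in the first coordinate: a harmonic function on `ℤ²` is determined by its
values on two adjacent columns, and any values there extend to a harmonic function. Prescribing
`φ` on `P` and `0` on the rest of the double strip `{0, 1} × ℤ` is exactly such a choice of two
columns. -/

/-- The column `x = k` of the harmonic function whose columns `x = 0` and `x = 1` are `a` and `b`:
the recursion solves `Δf (k + 1, y) = 0` for `f (k + 2, y)`. -/
def harmonicColumn (a b : ℤ → ℂ) : ℕ → ℤ → ℂ
  | 0 => a
  | 1 => b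
  | k + 2 => fun y => 4 * harmonicColumn a b (k + 1) y - harmonicColumn a b k y
      - harmonicColumn a b (k + 1) (y + 1) - harmonicColumn a b (k + 1) (y - 1)

/-- The columns `x < 0` come from the reflection `x ↦ 1 - x`, which swaps the roles of `a` and
`b`. -/
def harmonicExtension (a b : ℤ → ℂ) (j : ℤ × ℤ) : ℂ :=
  if 0 ≤ j.1 then harmonicColumn a b j.1.toNat j.2 else harmonicColumn b a (1 - j.1).toNat j.2

theorem discreteLaplacian2_reflect (f : ℤ × ℤ → ℂ) (x y : ℤ) :
    discreteLaplacian2 (fun j => f (1 - j.1, j.2)) (x, y) = discreteLaplacian2 f (1 - x, y) := by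
  simp only [discreteLaplacian2]
  rw [show 1 - (x + 1) = 1 - x - 1 by ring, show 1 - (x - 1) = 1 - x + 1 by ring]
  ring

section harmonicExtension

variable (a b : ℤ → ℂ)

theorem harmonicExtension_natCast (k : ℕ) (y : ℤ) :
    harmonicExtension a b (k, y) = harmonicColumn a b k y := by
  simp [harmonicExtension]

theorem harmonicExtension_reflect (x y : ℤ) :
    harmonicExtension b a (1 - x, y) = harmonicExtension a b (x, y) := by
  unfold harmonicExtension
  by_cases hx : 0 ≤ x <;> by_cases hx' : 0 ≤ 1 - x <;> simp only [hx, hx', if_true, if_false]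
  · obtain rfl | rfl : x = 0 ∨ x = 1 := by omega
    all_goals rfl
  · rw [sub_sub_cancel]
  · omega

theorem discreteLaplacian2_harmonicExtension_natCast_add_one (k : ℕ) (y : ℤ) :
    discreteLaplacian2 (harmonicExtension a b) (k + 1, y) = 0 := by
  simp only [discreteLaplacian2]
  rw [show (k : ℤ) + 1 + 1 = ((k + 2 : ℕ) : ℤ) by push_cast; ring, add_sub_cancel_right,
    show (k : ℤ) + 1 = ((k + 1 : ℕ) : ℤ) by push_cast; ring]
  simp only [harmonicExtension_natCast, harmonicColumn]
  ring

theorem discreteLaplacian2_harmonicExtension (i : ℤ × ℤ) :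
    discreteLaplacian2 (harmonicExtension a b) i = 0 := by
  obtain ⟨x, y⟩ := i
  rcases le_or_gt 1 x with hx | hx
  · obtain ⟨k, rfl⟩ : ∃ k : ℕ, x = k + 1 := ⟨(x - 1).toNat, by omega⟩
    exact discreteLaplacian2_harmonicExtension_natCast_add_one a b k y
  · obtain ⟨k, rfl⟩ : ∃ k : ℕ, x = 1 - (k + 1) := ⟨(-x).toNat, by omega⟩
    have hreflect : harmonicExtension a b = fun j => harmonicExtension b a (1 - j.1, j.2) :=
      funext fun j => (harmonicExtension_reflect a b j.1 j.2).symm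
    rw [hreflect, discreteLaplacian2_reflect, sub_sub_cancel]
    exact discreteLaplacian2_harmonicExtension_natCast_add_one b a k y

end harmonicExtension

section uniqueness

variable {f : ℤ × ℤ → ℂ} {a b : ℤ → ℂ}

theorem eq_harmonicColumn_of_harmonic (hf : ∀ i, discreteLaplacian2 f i = 0)
    (ha : ∀ y, f (0, y) = a y) (hb : ∀ y, f (1, y) = b y) (k : ℕ) (y : ℤ) :
    f (k, y) = harmonicColumn a b k y := by
  induction k using Nat.twoStepInduction generalizing y with
  | zero => simpa [harmonicColumn] using ha y
  | one => simpa [harmonicColumn] using hb y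
  | more k ih ih' =>
    have h := hf (k + 1, y)
    simp only [discreteLaplacian2] at h
    rw [show (k : ℤ) + 1 + 1 = ((k + 2 : ℕ) : ℤ) by push_cast; ring, add_sub_cancel_right,
      show (k : ℤ) + 1 = ((k + 1 : ℕ) : ℤ) by push_cast; ring, ih, ih', ih', ih'] at h
    simp only [harmonicColumn]
    linear_combination h

theorem eq_harmonicExtension_of_harmonic (hf : ∀ i, discreteLaplacian2 f i = 0)
    (ha : ∀ y, f (0, y) = a y) (hb : ∀ y, f (1, y) = b y) :
    f = harmonicExtension a b := by
  funext ⟨x, y⟩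
  rcases le_or_gt 0 x with hx | hx
  · lift x to ℕ using hx
    rw [harmonicExtension_natCast]
    exact eq_harmonicColumn_of_harmonic hf ha hb x y
  · obtain ⟨k, rfl⟩ : ∃ k : ℕ, x = 1 - k := ⟨(1 - x).toNat, by omega⟩
    have hreflected : ∀ i, discreteLaplacian2 (fun j => f (1 - j.1, j.2)) i = 0 :=
      fun i => (discreteLaplacian2_reflect f i.1 i.2).trans (hf _)
    rw [harmonicExtension_reflect b a, harmonicExtension_natCast]
    exact eq_harmonicColumn_of_harmonic hreflected (by simpa using hb) (by simpa using ha) k y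

end uniqueness

theorem existsUnique_harmonic_of_two_columns (a b : ℤ → ℂ) :
    ∃! f : ℤ × ℤ → ℂ, (∀ i, discreteLaplacian2 f i = 0) ∧
      (∀ y, f (0, y) = a y) ∧ ∀ y, f (1, y) = b y :=
  ⟨harmonicExtension a b,
    ⟨discreteLaplacian2_harmonicExtension a b, harmonicExtension_natCast a b 0,
      harmonicExtension_natCast a b 1⟩,
    fun _ ⟨hf, ha, hb⟩ => eq_harmonicExtension_of_harmonic hf ha hb⟩

theorem doubleStrip_conditions_iff_columns {P : Finset (ℤ × ℤ)}
    (hP : ∀ p ∈ P, p.1 = 0 ∨ p.1 = 1) (φ f : ℤ × ℤ → ℂ) :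
    ((∀ j : ℤ × ℤ, (j.1 = 0 ∨ j.1 = 1) → j ∉ P → f j = 0) ∧ ∀ p ∈ P, f p = φ p) ↔
      (∀ y, f (0, y) = (P : Set (ℤ × ℤ)).indicator φ (0, y)) ∧
        ∀ y, f (1, y) = (P : Set (ℤ × ℤ)).indicator φ (1, y) := by
  suffices ((∀ j : ℤ × ℤ, (j.1 = 0 ∨ j.1 = 1) → j ∉ P → f j = 0) ∧ ∀ p ∈ P, f p = φ p) ↔
      ∀ j : ℤ × ℤ, (j.1 = 0 ∨ j.1 = 1) → f j = (P : Set (ℤ × ℤ)).indicator φ j by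
    rw [this]
    exact ⟨fun h => ⟨fun y => h _ (Or.inl rfl), fun y => h _ (Or.inr rfl)⟩,
      fun ⟨h₀, h₁⟩ => by rintro ⟨x, y⟩ (rfl | rfl); exacts [h₀ y, h₁ y]⟩
  constructor
  · rintro ⟨hzero, hφ⟩ j hj
    by_cases hjP : j ∈ P
    · simp [hjP, hφ j hjP]
    · simp [hjP, hzero j hj hjP]
  · intro h
    exact ⟨fun j hj hjP => by simp [h j hj, hjP], fun p hp => by simp [h p (hP p hp), hp]⟩

theorem n_dim_family_of_continuations_general (P : Finset (ℤ × ℤ))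
    (hP : ∀ p ∈ P, p.1 = 0 ∨ p.1 = 1)
    (φ : ℤ × ℤ → ℂ) :
    ∃! f : ℤ × ℤ → ℂ,
      (∀ i, discreteLaplacian2 f i = 0) ∧
      (∀ j : ℤ × ℤ, (j.1 = 0 ∨ j.1 = 1) → j ∉ P → f j = 0) ∧
      (∀ p ∈ P, f p = φ p) :=
  (existsUnique_congr fun f => and_congr_right' (doubleStrip_conditions_iff_columns hP φ f)).mpr
    (existsUnique_harmonic_of_two_columns _ _)

/-- No unique continuation from a double strip with `n` points omitted: for a set
`P` of `n` points inside the double strip `{j : j₁ ∈ {0,1}}`, every assignment of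
values on `P` extends uniquely to a discrete harmonic function on `ℤ²` vanishing on
the double strip outside `P`. Hence the space of such harmonic functions is
`n`-dimensional. -/
theorem n_dim_family_of_continuations (n : ℕ) (P : Finset (ℤ × ℤ))
    (hcard : P.card = n) (hP : ∀ p ∈ P, p.1 = 0 ∨ p.1 = 1)
    (φ : ℤ × ℤ → ℂ) :
    ∃! f : ℤ × ℤ → ℂ,
      (∀ i, discreteLaplacian2 f i = 0) ∧
      (∀ j : ℤ × ℤ, (j.1 = 0 ∨ j.1 = 1) → j ∉ P → f j = 0) ∧
      (∀ p ∈ P, f p = φ p) :=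
  n_dim_family_of_continuations_general P hP φ
end
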